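/- Let A be a finite discrete generalized metric space (all distances between distinct points equal ∞). Then the enriched hom-functor Met(A,−) : Met → Met preserves filtered colimits; in particular, A is finitely presentable in the enriched sense. -/

import Mathlib

open CategoryTheory CategoryTheory.Limits

/-- The category of generalized (extended-real-valued) metric spaces with
nonexpanding (1-Lipschitz) maps. -/
structure MetCat : Type 1 where
  carrier : Type
  [str : EMetricSpace carrier]

attribute [instance] MetCat.str

instance : CoeSort MetCat Type := ⟨MetCat.carrier⟩

instance : Category MetCat where
  Hom X Y := {f : X.carrier → Y.carrier // LipschitzWith 1 f}
  id X := ⟨id, LipschitzWith.id⟩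
  comp f g := ⟨g.1 ∘ f.1, (by simpa using g.2.comp f.2)⟩

/-- The category of generalized pseudometric spaces with nonexpanding maps. -/
structure PMetCat : Type 1 where
  carrier : Type
  [str : PseudoEMetricSpace carrier]

attribute [instance] PMetCat.str

instance : CoeSort PMetCat Type := ⟨PMetCat.carrier⟩

instance : Category PMetCat where
  Hom X Y := {f : X.carrier → Y.carrier // LipschitzWith 1 f}
  id X := ⟨id, LipschitzWith.id⟩
  comp f g := ⟨g.1 ∘ f.1, (by simpa using g.2.comp f.2)⟩

/-- The full inclusion of metric spaces into pseudometric spaces. -/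
def metToPMet : MetCat ⥤ PMetCat where
  obj X := ⟨X.carrier⟩
  map f := ⟨f.1, f.2⟩

/-- The sup-metric on the set of nonexpanding maps `X → Y`. -/
noncomputable instance MetCat.homEMetric (X Y : MetCat) : EMetricSpace (X ⟶ Y) where
  edist f g := ⨆ x : X.carrier, edist (f.1 x) (g.1 x)
  edist_self f := by simp
  edist_comm f g := by simp [edist_comm]
  edist_triangle f g h :=
    iSup_le fun x => le_trans (edist_triangle _ (g.1 x) _)
      (add_le_add (le_iSup (fun x => edist (f.1 x) (g.1 x)) x)
        (le_iSup (fun x => edist (g.1 x) (h.1 x)) x))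
  eq_of_edist_eq_zero := by
    intro f g h
    apply Subtype.ext
    funext x
    refine eq_of_edist_eq_zero (le_antisymm ?_ zero_le)
    calc edist (f.1 x) (g.1 x) ≤ ⨆ x : X.carrier, edist (f.1 x) (g.1 x) :=
          le_iSup (fun x => edist (f.1 x) (g.1 x)) x
      _ = 0 := h

/-- The enriched hom-functor `Met(A, -) : Met ⥤ Met`, sending `Y` to the space of
nonexpanding maps `A → Y` with the sup-metric. -/
noncomputable def MetCat.enrichedHom (A : MetCat) : MetCat ⥤ MetCat where
  obj Y := ⟨A ⟶ Y⟩
  map f := ⟨fun g => g ≫ f, LipschitzWith.of_edist_le fun g h => by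
    refine iSup_mono fun x => ?_
    exact le_of_le_of_eq (f.2.edist_le_mul (g.1 x) (h.1 x)) (by simp)⟩
  map_id Y := by
    apply Subtype.ext
    funext g
    exact Category.comp_id g
  map_comp f k := by
    apply Subtype.ext
    funext g
    exact (Category.assoc g f k).symm

/-!
A filtered colimit of metric spaces is the disjoint union of the stages modulo distance zero,
two points being as close as they become at common later stages. Any cocone whose legs are
jointly surjective and realise these distances is a colimit.
For finite discrete `A`, `Met(A, -)` sends such a cocone to another one: a map `A → colim F`
picks finitely many points, which all come from a single stage, and any map out of a discrete
space is nonexpanding; and the sup-distance of two maps `A → F j` is approached, up to `ε`, at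
a single later stage, because finitely many arrows out of `j` have a common wide-span completion.
-/

open IsFiltered
open scoped ENNReal

lemma lipschitzWith_one_of_edist_eq_top {X Y : Type*} [PseudoEMetricSpace X]
    [PseudoEMetricSpace Y] (hdisc : ∀ x y : X, x ≠ y → edist x y = ⊤) (f : X → Y) :
    LipschitzWith 1 f :=
  LipschitzWith.of_edist_le fun x y => by
    rcases eq_or_ne x y with rfl | h
    · simp
    · simp [hdisc x y h]

namespace MetCat

@[ext]
lemma hom_ext {X Y : MetCat} {f g : X ⟶ Y} (h : ∀ x, f.1 x = g.1 x) : f = g :=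
  Subtype.ext (funext h)

@[simp]
lemma id_apply {X : MetCat} (x : X) : (𝟙 X : X ⟶ X).1 x = x := rfl

lemma hom_edist_le {X Y : MetCat} (f : X ⟶ Y) (x y : X) :
    edist (f.1 x) (f.1 y) ≤ edist x y := by
  simpa using f.2.edist_le_mul x y

section Cocone

variable {J : Type} [SmallCategory J] {F : J ⥤ MetCat}

lemma map_comp_apply {i j k : J} (f : i ⟶ j) (g : j ⟶ k) (x : F.obj i) :
    (F.map (f ≫ g)).1 x = (F.map g).1 ((F.map f).1 x) := by
  rw [F.map_comp]; rfl

lemma edist_map_comp_le {i i' j k : J} (f : i ⟶ j) (f' : i' ⟶ j) (g : j ⟶ k) (x : F.obj i)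
    (x' : F.obj i') :
    edist ((F.map (f ≫ g)).1 x) ((F.map (f' ≫ g)).1 x') ≤
      edist ((F.map f).1 x) ((F.map f').1 x') := by
  rw [map_comp_apply, map_comp_apply]
  exact hom_edist_le _ _ _

lemma cocone_w_apply (c : Cocone F) {i j : J} (f : i ⟶ j) (x : F.obj i) :
    (c.ι.app j).1 ((F.map f).1 x) = (c.ι.app i).1 x :=
  congrArg (fun g => g.1 x) (c.w f)

noncomputable def eventualEdist (F : J ⥤ MetCat) {j : J} (x y : F.obj j) : ℝ≥0∞ :=
  ⨅ (k : J) (f : j ⟶ k), edist ((F.map f).1 x) ((F.map f).1 y)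

lemma edist_cocone_le_eventualEdist (c : Cocone F) {j : J} (x y : F.obj j) :
    edist ((c.ι.app j).1 x) ((c.ι.app j).1 y) ≤ eventualEdist F x y :=
  le_iInf₂ fun k f => by
    rw [← cocone_w_apply c f x, ← cocone_w_apply c f y]
    exact hom_edist_le _ _ _

def coconeSigma (c : Cocone F) (p : Σ j, F.obj j) : c.pt := (c.ι.app p.1).1 p.2

structure IsMetricColimit (c : Cocone F) : Prop where
  surjective : Function.Surjective (coconeSigma c)
  eventualEdist_le : ∀ (j : J) (x y : F.obj j),
    eventualEdist F x y ≤ edist ((c.ι.app j).1 x) ((c.ι.app j).1 y)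

variable [IsFiltered J] {c : Cocone F}

lemma IsMetricColimit.edist_le (hc : IsMetricColimit c) (s : Cocone F) (p q : Σ j, F.obj j) :
    edist (coconeSigma s p) (coconeSigma s q) ≤ edist (coconeSigma c p) (coconeSigma c q) := by
  obtain ⟨j, x⟩ := p
  obtain ⟨k, y⟩ := q
  simp only [coconeSigma]
  rw [← cocone_w_apply s (leftToMax j k), ← cocone_w_apply s (rightToMax j k),
    ← cocone_w_apply c (leftToMax j k), ← cocone_w_apply c (rightToMax j k)]
  exact (edist_cocone_le_eventualEdist s _ _).trans (hc.eventualEdist_le _ _ _)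

lemma IsMetricColimit.eq_of_eq (hc : IsMetricColimit c) (s : Cocone F) {p q : Σ j, F.obj j}
    (h : coconeSigma c p = coconeSigma c q) : coconeSigma s p = coconeSigma s q :=
  edist_le_zero.1 <| (hc.edist_le s p q).trans (by rw [h, edist_self])

noncomputable def IsMetricColimit.isColimit (hc : IsMetricColimit c) : IsColimit c where
  desc s := ⟨fun y => coconeSigma s (Function.surjInv hc.surjective y),
    LipschitzWith.of_edist_le fun y y' => by
      simpa only [Function.surjInv_eq] using hc.edist_le s (Function.surjInv hc.surjective y)
        (Function.surjInv hc.surjective y')⟩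
  fac s j := by
    ext x
    exact hc.eq_of_eq s (p := Function.surjInv hc.surjective _) (q := ⟨j, x⟩)
      (Function.surjInv_eq hc.surjective _)
  uniq s m hm := by
    ext y
    obtain ⟨⟨j, x⟩, rfl⟩ := hc.surjective y
    exact (congrArg (fun g => g.1 x) (hm j)).trans
      (hc.eq_of_eq s (p := ⟨j, x⟩) (Function.surjInv_eq hc.surjective _).symm)

end Cocone

section Construction

variable {J : Type} [SmallCategory J] (F : J ⥤ MetCat)

structure ColimitPre : Type where
  stage : J
  pt : F.obj stage

def Cospan (p q : ColimitPre F) : Type := Σ k : J, (p.stage ⟶ k) × (q.stage ⟶ k)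

variable {F}

noncomputable def Cospan.cost {p q : ColimitPre F} (r : Cospan F p q) : ℝ≥0∞ :=
  edist ((F.map r.2.1).1 p.pt) ((F.map r.2.2).1 q.pt)

variable [IsFiltered J]

noncomputable instance : PseudoEMetricSpace (ColimitPre F) where
  edist p q := ⨅ r : Cospan F p q, r.cost
  edist_self p :=
    le_antisymm (iInf_le_of_le ⟨p.stage, 𝟙 _, 𝟙 _⟩ (by simp [Cospan.cost])) zero_le
  edist_comm p q := by
    have key : ∀ p q : ColimitPre F,
        ⨅ r : Cospan F p q, r.cost ≤ ⨅ r : Cospan F q p, r.cost :=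
      fun p q => le_iInf fun r => iInf_le_of_le ⟨r.1, r.2.2, r.2.1⟩ (edist_comm _ _).le
    exact le_antisymm (key p q) (key q p)
  edist_triangle p q r := ENNReal.le_iInf_add_iInf fun ⟨k, f, g⟩ ⟨l, g', h⟩ => by
    obtain ⟨m, u, v, huv⟩ := IsFiltered.span g g'
    refine iInf_le_of_le ⟨m, f ≫ u, h ≫ v⟩ ?_
    calc edist ((F.map (f ≫ u)).1 p.pt) ((F.map (h ≫ v)).1 r.pt)
        ≤ edist ((F.map (f ≫ u)).1 p.pt) ((F.map (g ≫ u)).1 q.pt)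
          + edist ((F.map (g' ≫ v)).1 q.pt) ((F.map (h ≫ v)).1 r.pt) := by
          rw [← huv]; exact edist_triangle _ _ _
      _ ≤ _ := add_le_add (edist_map_comp_le _ _ _ _ _) (edist_map_comp_le _ _ _ _ _)

lemma ColimitPre.edist_le {p q : ColimitPre F} (r : Cospan F p q) : edist p q ≤ r.cost :=
  iInf_le _ r

variable (F) in
noncomputable def colimitCocone : Cocone F where
  pt := ⟨SeparationQuotient (ColimitPre F)⟩
  ι.app j := ⟨fun x => SeparationQuotient.mk ⟨j, x⟩,
    LipschitzWith.of_edist_le fun x y => by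
      rw [SeparationQuotient.edist_mk]
      simpa [Cospan.cost] using
        ColimitPre.edist_le (p := ⟨j, x⟩) (q := ⟨j, y⟩) ⟨j, 𝟙 j, 𝟙 j⟩⟩
  ι.naturality i j f := by
    ext x
    refine SeparationQuotient.mk_eq_mk.2 (EMetric.inseparable_iff.2 (le_antisymm ?_ zero_le))
    simpa [Cospan.cost] using
      ColimitPre.edist_le (p := ⟨j, (F.map f).1 x⟩) (q := ⟨i, x⟩) ⟨j, 𝟙 j, f⟩

lemma isMetricColimit_colimitCocone : IsMetricColimit (colimitCocone F) where
  surjective y := by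
    obtain ⟨⟨j, x⟩, rfl⟩ := SeparationQuotient.surjective_mk y
    exact ⟨⟨j, x⟩, rfl⟩
  eventualEdist_le j x y := by
    change _ ≤ edist (SeparationQuotient.mk (⟨j, x⟩ : ColimitPre F))
      (SeparationQuotient.mk ⟨j, y⟩)
    rw [SeparationQuotient.edist_mk]
    refine le_iInf fun r => ?_
    obtain ⟨k, f, g⟩ := r
    calc eventualEdist F x y
        ≤ edist ((F.map (f ≫ coeqHom f g)).1 x) ((F.map (g ≫ coeqHom f g)).1 y) := by
          rw [← coeq_condition f g]; exact iInf₂_le _ _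
      _ ≤ _ := edist_map_comp_le _ _ _ _ _

end Construction

section EnrichedHom

variable {J : Type} [SmallCategory J] [IsFiltered J] {F : J ⥤ MetCat} {c : Cocone F}
  (A : MetCat) [Finite A]

lemma IsMetricColimit.exists_lift (hdisc : ∀ x y : A, x ≠ y → edist x y = ⊤)
    (hc : IsMetricColimit c) (g : A ⟶ c.pt) :
    ∃ (j : J) (h : A ⟶ F.obj j), h ≫ c.ι.app j = g := by
  choose p hp using fun a => hc.surjective (g.1 a)
  obtain ⟨k, hk⟩ : ∃ k : J, ∀ a, Nonempty ((p a).1 ⟶ k) := by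
    classical
    cases nonempty_fintype A
    obtain ⟨k, hk⟩ := sup_objs_exists (Finset.univ.image fun a => (p a).1)
    exact ⟨k, fun a => hk (by simp)⟩
  refine ⟨k, ⟨fun a => (F.map (hk a).some).1 (p a).2,
    lipschitzWith_one_of_edist_eq_top hdisc _⟩, ?_⟩
  ext a
  exact (cocone_w_apply c (hk a).some (p a).2).trans (hp a)

lemma IsMetricColimit.eventualEdist_enrichedHom_le (hc : IsMetricColimit c) {j : J}
    (h h' : A ⟶ F.obj j) :
    eventualEdist (F ⋙ enrichedHom A) h h' ≤ edist (h ≫ c.ι.app j) (h' ≫ c.ι.app j) := by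
  set D := edist (h ≫ c.ι.app j) (h' ≫ c.ι.app j)
  refine ENNReal.le_of_forall_pos_le_add fun ε hε hD => ?_
  have hclose : ∀ a, ∃ (k : J) (f : j ⟶ k),
      edist ((F.map f).1 (h.1 a)) ((F.map f).1 (h'.1 a)) < D + ε := by
    intro a
    have hlt : eventualEdist F (h.1 a) (h'.1 a) < D + ε :=
      ((hc.eventualEdist_le j _ _).trans
        (le_iSup (fun a => edist ((c.ι.app j).1 (h.1 a)) ((c.ι.app j).1 (h'.1 a))) a)).trans_lt
        (ENNReal.lt_add_right hD.ne (ENNReal.coe_pos.2 hε).ne')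
    simpa only [eventualEdist, iInf_lt_iff] using hlt
  choose k f hf using hclose
  obtain ⟨m, fm, g, hg⟩ := wideSpan f
  refine iInf₂_le_of_le m fm (iSup_le fun a => ?_)
  rw [← hg a]
  exact (edist_map_comp_le _ _ _ _ _).trans (hf a).le

lemma IsMetricColimit.mapCocone_enrichedHom (hdisc : ∀ x y : A, x ≠ y → edist x y = ⊤)
    (hc : IsMetricColimit c) : IsMetricColimit ((enrichedHom A).mapCocone c) where
  surjective g := by
    obtain ⟨j, h, rfl⟩ := hc.exists_lift A hdisc g
    exact ⟨⟨j, h⟩, rfl⟩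
  eventualEdist_le _ := hc.eventualEdist_enrichedHom_le A

end EnrichedHom

end MetCat

/-- If `A` is a finite discrete generalized metric space (all distances
between distinct points are `∞`), then the enriched hom-functor `Met(A,-) : Met ⥤ Met`
preserves filtered colimits; in particular `A` is finitely presentable in the enriched
sense. -/
theorem enrichedHom_of_finite_discrete_preserves_filtered_colimits
    (A : MetCat) [Finite A.carrier]
    (hdisc : ∀ x y : A.carrier, x ≠ y → edist x y = ⊤)
    (J : Type) [SmallCategory J] [IsFiltered J] :
    Nonempty (PreservesColimitsOfShape J (MetCat.enrichedHom A)) :=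
  ⟨⟨fun {_} => preservesColimit_of_preserves_colimit_cocone
    MetCat.isMetricColimit_colimitCocone.isColimit
    (MetCat.isMetricColimit_colimitCocone.mapCocone_enrichedHom A hdisc).isColimit⟩⟩
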